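/- Define the complete elliptic integral of the first kind by K(m) = ∫₀^{π/2} (1 − m sin²θ)^{−1/2} dθ for m ∈ [0,1). Fix L > 0, and for s ∈ (0, L/2) set y = 1/2 − s/L and k(s) = tan(πy/2)/tan(π(1−y)/2). Then k(s) ∈ (0,1) for all s ∈ (0, L/2), and the function h(s) = 2π K(k(s)²)/K(1 − k(s)²) is strictly decreasing on (0, L/2). -/

import Mathlib

/-- The complete elliptic integral of the first kind,
`K(m) = ∫₀^{π/2} (1 − m sin²θ)^{−1/2} dθ`. -/
noncomputable def ellipticK (m : ℝ) : ℝ :=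
  ∫ θ in (0 : ℝ)..(Real.pi / 2), (1 - m * Real.sin θ ^ 2) ^ (-(1 / 2) : ℝ)

lemma ellipticK_integrand_pos {m θ : ℝ} (hm : m < 1) (hm0 : 0 ≤ m) :
    0 < 1 - m * Real.sin θ ^ 2 := by
  have h1 : m * Real.sin θ ^ 2 ≤ m * 1 := by
    apply mul_le_mul_of_nonneg_left _ hm0
    rw [← Real.sin_sq_add_cos_sq θ]; nlinarith [sq_nonneg (Real.cos θ)]
  linarith

lemma ellipticK_integrable {m : ℝ} (hm0 : 0 ≤ m) (hm : m < 1) :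
    IntervalIntegrable (fun θ : ℝ => (1 - m * Real.sin θ ^ 2) ^ (-(1 / 2) : ℝ))
      MeasureTheory.volume 0 (Real.pi / 2) := by
  apply Continuous.intervalIntegrable
  apply Continuous.rpow_const (by continuity)
  intro x
  exact Or.inl (ne_of_gt (ellipticK_integrand_pos hm hm0))

lemma ellipticK_pos {m : ℝ} (hm0 : 0 ≤ m) (hm : m < 1) : 0 < ellipticK m := by
  apply intervalIntegral.intervalIntegral_pos_of_pos_on (ellipticK_integrable hm0 hm)
  · intro x _
    exact Real.rpow_pos_of_pos (ellipticK_integrand_pos hm hm0) _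
  · positivity

lemma ellipticK_lt {m₁ m₂ : ℝ} (hm0 : 0 ≤ m₁) (h12 : m₁ < m₂) (hm : m₂ < 1) :
    ellipticK m₁ < ellipticK m₂ := by
  have hi1 := ellipticK_integrable hm0 (h12.trans hm)
  have hi2 := ellipticK_integrable (hm0.trans h12.le) hm
  have key : 0 < ellipticK m₂ - ellipticK m₁ := by
    rw [ellipticK, ellipticK, ← intervalIntegral.integral_sub hi2 hi1]
    apply intervalIntegral.intervalIntegral_pos_of_pos_on ((hi2.sub hi1))
    · intro x hx
      have hs : 0 < Real.sin x := Real.sin_pos_of_pos_of_lt_pi hx.1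
        (hx.2.trans (by linarith [Real.pi_pos]))
      have hlt : 1 - m₂ * Real.sin x ^ 2 < 1 - m₁ * Real.sin x ^ 2 := by
        have hsq : 0 < Real.sin x ^ 2 := by positivity
        nlinarith
      have := Real.rpow_lt_rpow_of_neg
        (ellipticK_integrand_pos hm (hm0.trans h12.le)) hlt (by norm_num : (-(1/2) : ℝ) < 0)
      linarith
    · positivity
  linarith

/-- **The finite-cylinder modulus `h` is a strictly decreasing function of the size
`s` of the measured regions (Figure 9, right).** For `s ∈ (0, L/2)`, with
`y = 1/2 − s/L` and `k(s) = tan(πy/2)/tan(π(1−y)/2)`, one has `k(s) ∈ (0,1)`, and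
`h(s) = 2π K(k(s)²)/K(1 − k(s)²)` is strictly decreasing on `(0, L/2)`. -/
theorem modulus_strictAnti_in_measured_size
    (L : ℝ) (hL : 0 < L)
    (k : ℝ → ℝ)
    (hk : ∀ s, k s = Real.tan (Real.pi * (1 / 2 - s / L) / 2) /
      Real.tan (Real.pi * (1 - (1 / 2 - s / L)) / 2))
    (h : ℝ → ℝ)
    (hh : ∀ s, h s = 2 * Real.pi * ellipticK (k s ^ 2) / ellipticK (1 - k s ^ 2)) :
    (∀ s ∈ Set.Ioo (0 : ℝ) (L / 2), k s ∈ Set.Ioo (0 : ℝ) 1)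
    ∧ StrictAntiOn h (Set.Ioo (0 : ℝ) (L / 2)) := by
  have hpi := Real.pi_pos
  -- basic facts about the angles
  have hang : ∀ s ∈ Set.Ioo (0 : ℝ) (L / 2),
      0 < Real.pi * (1 / 2 - s / L) / 2 ∧
      Real.pi * (1 / 2 - s / L) / 2 < Real.pi * (1 - (1 / 2 - s / L)) / 2 ∧
      Real.pi * (1 - (1 / 2 - s / L)) / 2 < Real.pi / 2 := by
    intro s hs
    have h1 : 0 < s / L := div_pos hs.1 hL
    have h2 : s / L < 1 / 2 := (div_lt_iff₀ hL).2 (by linarith [hs.2])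
    refine ⟨by nlinarith, by nlinarith, by nlinarith⟩
  have hkmem : ∀ s ∈ Set.Ioo (0 : ℝ) (L / 2), k s ∈ Set.Ioo (0 : ℝ) 1 := by
    intro s hs
    obtain ⟨h1, h2, h3⟩ := hang s hs
    have ht1 : 0 < Real.tan (Real.pi * (1 / 2 - s / L) / 2) :=
      Real.tan_pos_of_pos_of_lt_pi_div_two h1 (h2.trans h3)
    have ht2 : Real.tan (Real.pi * (1 / 2 - s / L) / 2) <
        Real.tan (Real.pi * (1 - (1 / 2 - s / L)) / 2) := by
      apply Real.tan_lt_tan_of_nonneg_of_lt_pi_div_two h1.le h3 h2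
    rw [hk]
    exact ⟨div_pos ht1 (ht1.trans ht2), (div_lt_one (ht1.trans ht2)).2 ht2⟩
  refine ⟨hkmem, ?_⟩
  intro s₁ hs₁ s₂ hs₂ hlt
  -- k is strictly decreasing
  have hkanti : k s₂ < k s₁ := by
    obtain ⟨a1, a2, a3⟩ := hang s₁ hs₁
    obtain ⟨b1, b2, b3⟩ := hang s₂ hs₂
    have hsd : s₁ / L < s₂ / L := by
      apply div_lt_div_of_pos_right hlt hL
    have hAlt : Real.tan (Real.pi * (1 / 2 - s₂ / L) / 2) <
        Real.tan (Real.pi * (1 / 2 - s₁ / L) / 2) :=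
      Real.tan_lt_tan_of_nonneg_of_lt_pi_div_two b1.le (a2.trans a3) (by nlinarith)
    have hBlt : Real.tan (Real.pi * (1 - (1 / 2 - s₁ / L)) / 2) <
        Real.tan (Real.pi * (1 - (1 / 2 - s₂ / L)) / 2) :=
      Real.tan_lt_tan_of_nonneg_of_lt_pi_div_two (a1.trans a2).le b3 (by nlinarith)
    have htA2 : 0 < Real.tan (Real.pi * (1 / 2 - s₂ / L) / 2) :=
      Real.tan_pos_of_pos_of_lt_pi_div_two b1 (b2.trans b3)
    have htB1 : 0 < Real.tan (Real.pi * (1 - (1 / 2 - s₁ / L)) / 2) :=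
      Real.tan_pos_of_pos_of_lt_pi_div_two (a1.trans a2) a3
    rw [hk, hk]
    exact div_lt_div₀ hAlt hBlt.le (htA2.trans hAlt).le htB1
  have h1 := hkmem s₁ hs₁
  have h2 := hkmem s₂ hs₂
  have hk2 : k s₂ ^ 2 < k s₁ ^ 2 := by nlinarith [h1.1, h2.1]
  have hk1lt : k s₁ ^ 2 < 1 := by nlinarith [h1.1, h1.2]
  have hk2pos : 0 < k s₂ ^ 2 := pow_pos h2.1 2
  have hK1 : ellipticK (k s₂ ^ 2) < ellipticK (k s₁ ^ 2) :=
    ellipticK_lt hk2pos.le hk2 hk1lt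
  have hK2 : ellipticK (1 - k s₁ ^ 2) < ellipticK (1 - k s₂ ^ 2) :=
    ellipticK_lt (by linarith) (by linarith) (by linarith)
  have hP1 : 0 < ellipticK (k s₂ ^ 2) := ellipticK_pos hk2pos.le (by linarith)
  have hP2 : 0 < ellipticK (1 - k s₁ ^ 2) := ellipticK_pos (by linarith) (by linarith)
  rw [hh, hh]
  have hP3 : 0 < ellipticK (1 - k s₂ ^ 2) := ellipticK_pos (by nlinarith [h2.1, h2.2]) (by nlinarith [h2.1])
  exact div_lt_div₀ (by nlinarith) hK2.le (by nlinarith) hP2
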